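/- Let n ≥ 3 and let L be a smooth field of endomorphisms on an open connected set U ⊆ ℝⁿ such that the Frölicher–Nijenhuis bracket [[L, A]] vanishes for every constant field of endomorphisms A given by a constant symmetric n×n matrix. Then in the standard coordinates x = (x¹,…,xⁿ)ᵀ the matrix of L has the form L(x) = A₀ + x bᵀ + c xᵀ + K x xᵀ for some constant n×n matrix A₀, constant vectors b, c ∈ ℝⁿ, and a constant K ∈ ℝ. -/

import Mathlib

open scoped BigOperators

/-- Partial derivative `∂_k f` at `x`. -/
noncomputable def pd {n : ℕ} (f : (Fin n → ℝ) → ℝ) (k : Fin n) (x : Fin n → ℝ) : ℝ :=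
  fderiv ℝ f x (Pi.single k 1)

/-- Christoffel symbols `Γ^i_{jk}` of a metric `g`. -/
noncomputable def Christoffel {n : ℕ} (g : (Fin n → ℝ) → Matrix (Fin n) (Fin n) ℝ)
    (i j k : Fin n) (x : Fin n → ℝ) : ℝ :=
  (1 / 2) * ∑ s, (g x)⁻¹ i s *
    (pd (fun y => g y s k) j x + pd (fun y => g y s j) k x - pd (fun y => g y j k) s x)

/-- Curvature tensor `R^l_{ijk}` of a metric `g`. -/
noncomputable def Curv {n : ℕ} (g : (Fin n → ℝ) → Matrix (Fin n) (Fin n) ℝ)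
    (l i j k : Fin n) (x : Fin n → ℝ) : ℝ :=
  pd (Christoffel g l i k) j x - pd (Christoffel g l i j) k x
    + ∑ s, (Christoffel g l j s x * Christoffel g s i k x
        - Christoffel g l k s x * Christoffel g s i j x)

/-- `g` is a (smooth pseudo-Riemannian) metric on `U`. -/
def IsMetricOn {n : ℕ} (g : (Fin n → ℝ) → Matrix (Fin n) (Fin n) ℝ)
    (U : Set (Fin n → ℝ)) : Prop :=
  (∀ i j, ContDiffOn ℝ (⊤ : ℕ∞) (fun x => g x i j) U) ∧
    (∀ x ∈ U, (g x).IsSymm) ∧ ∀ x ∈ U, (g x).det ≠ 0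

/-- The metric `g` is flat on `U`. -/
def IsFlatOn {n : ℕ} (g : (Fin n → ℝ) → Matrix (Fin n) (Fin n) ℝ)
    (U : Set (Fin n → ℝ)) : Prop :=
  ∀ x ∈ U, ∀ l i j k : Fin n, Curv g l i j k x = 0

/-- The metric `g` has constant curvature `K` on `U`:
`g^{js} R^i_{skm} = K (δ^i_k δ^j_m − δ^i_m δ^j_k)`. -/
def HasConstCurvOn {n : ℕ} (g : (Fin n → ℝ) → Matrix (Fin n) (Fin n) ℝ)
    (U : Set (Fin n → ℝ)) (K : ℝ) : Prop :=
  ∀ x ∈ U, ∀ i j k m : Fin n,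
    (∑ s, (g x)⁻¹ j s * Curv g i s k m x)
      = K * ((if i = k then (1:ℝ) else 0) * (if j = m then (1:ℝ) else 0)
          - (if i = m then (1:ℝ) else 0) * (if j = k then (1:ℝ) else 0))

/-- `λ = ½ tr L`. -/
noncomputable def lamL {n : ℕ} (L : (Fin n → ℝ) → Matrix (Fin n) (Fin n) ℝ)
    (x : Fin n → ℝ) : ℝ :=
  (1 / 2) * ∑ i, L x i i

/-- `L_{ij} = L^s_i g_{sj}`. -/
noncomputable def lowL {n : ℕ} (g L : (Fin n → ℝ) → Matrix (Fin n) (Fin n) ℝ)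
    (x : Fin n → ℝ) (i j : Fin n) : ℝ :=
  ∑ s, L x s i * g x s j

/-- `∇_k L_{ij} = ∂_k L_{ij} − Γ^s_{ki} L_{sj} − Γ^s_{kj} L_{is}`. -/
noncomputable def covL {n : ℕ} (g L : (Fin n → ℝ) → Matrix (Fin n) (Fin n) ℝ)
    (k i j : Fin n) (x : Fin n → ℝ) : ℝ :=
  pd (fun y => lowL g L y i j) k x
    - ∑ s, Christoffel g s k i x * lowL g L x s j
    - ∑ s, Christoffel g s k j x * lowL g L x i s

/-- `L` is geodesically compatible with `g` on `U`: it is smooth, `L_{ij}` is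
symmetric, and `∇_k L_{ij} = λ_i g_{jk} + λ_j g_{ik}` with `λ = ½ tr L`. -/
def GeodCompatOn {n : ℕ} (g L : (Fin n → ℝ) → Matrix (Fin n) (Fin n) ℝ)
    (U : Set (Fin n → ℝ)) : Prop :=
  (∀ i j, ContDiffOn ℝ (⊤ : ℕ∞) (fun x => L x i j) U) ∧
    (∀ x ∈ U, ∀ i j, lowL g L x i j = lowL g L x j i) ∧
    ∀ x ∈ U, ∀ k i j, covL g L k i j x
      = pd (lamL L) i x * g x j k + pd (lamL L) j x * g x i k

/-- `h` is a Casimir of the constant-curvature (curvature `K`) metric `g`: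
`g^{is} (∂_s ∂_j h − Γ^r_{sj} ∂_r h) + K h δ^i_j = 0`. -/
def IsCasimirOn {n : ℕ} (g : (Fin n → ℝ) → Matrix (Fin n) (Fin n) ℝ) (K : ℝ)
    (U : Set (Fin n → ℝ)) (h : (Fin n → ℝ) → ℝ) : Prop :=
  ContDiffOn ℝ (⊤ : ℕ∞) h U ∧
    ∀ x ∈ U, ∀ i j : Fin n,
      (∑ s, (g x)⁻¹ i s * (pd (pd h j) s x - ∑ r, Christoffel g r s j x * pd h r x))
        + K * h x * (if i = j then (1:ℝ) else 0) = 0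

/-- Lie bracket of vector fields: `[v,w]^i = v^s ∂_s w^i − w^s ∂_s v^i`. -/
noncomputable def lieB {n : ℕ} (v w : (Fin n → ℝ) → Fin n → ℝ) (x : Fin n → ℝ) : Fin n → ℝ :=
  fun i => ∑ s, (v x s * pd (fun y => w y i) s x - w x s * pd (fun y => v y i) s x)

/-- Pointwise application of a field of endomorphisms to a vector field. -/
noncomputable def appE {n : ℕ} (L : (Fin n → ℝ) → Matrix (Fin n) (Fin n) ℝ)
    (v : (Fin n → ℝ) → Fin n → ℝ) : (Fin n → ℝ) → Fin n → ℝ :=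
  fun x => (L x).mulVec (v x)

/-- Nijenhuis torsion `N_L(v,w) = L²[v,w] − L[Lv,w] − L[v,Lw] + [Lv,Lw]`. -/
noncomputable def nijT {n : ℕ} (L : (Fin n → ℝ) → Matrix (Fin n) (Fin n) ℝ)
    (v w : (Fin n → ℝ) → Fin n → ℝ) (x : Fin n → ℝ) : Fin n → ℝ :=
  (L x).mulVec ((L x).mulVec (lieB v w x))
    - (L x).mulVec (lieB (appE L v) w x)
    - (L x).mulVec (lieB v (appE L w) x)
    + lieB (appE L v) (appE L w) x

/-- `L` is a Nijenhuis operator on `U`. -/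
def IsNijenhuisOn {n : ℕ} (L : (Fin n → ℝ) → Matrix (Fin n) (Fin n) ℝ)
    (U : Set (Fin n → ℝ)) : Prop :=
  ∀ v w : (Fin n → ℝ) → Fin n → ℝ, ContDiffOn ℝ (⊤ : ℕ∞) v U → ContDiffOn ℝ (⊤ : ℕ∞) w U →
    ∀ x ∈ U, nijT L v w x = 0

/-- Frölicher–Nijenhuis bracket `[[L,M]](v,w)`. -/
noncomputable def fnB {n : ℕ} (L M : (Fin n → ℝ) → Matrix (Fin n) (Fin n) ℝ)
    (v w : (Fin n → ℝ) → Fin n → ℝ) (x : Fin n → ℝ) : Fin n → ℝ :=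
  (L x).mulVec (lieB (appE M v) w x) + (L x).mulVec (lieB v (appE M w) x)
    + (M x).mulVec (lieB (appE L v) w x) + (M x).mulVec (lieB v (appE L w) x)
    - (L x).mulVec ((M x).mulVec (lieB v w x))
    - (M x).mulVec ((L x).mulVec (lieB v w x))
    - lieB (appE L v) (appE M w) x - lieB (appE M v) (appE L w) x

/- ===================== Auxiliary material for stmt_12 ===================== -/

section Stmt12Aux

variable {n : ℕ} {U : Set (Fin n → ℝ)}

lemma pd_const' (c : ℝ) (k : Fin n) (x : Fin n → ℝ) : pd (fun _ => c) k x = 0 := by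
  simp [pd]

lemma pd_congr_on (hU : IsOpen U) {f g : (Fin n → ℝ) → ℝ}
    {x : Fin n → ℝ} (hx : x ∈ U) (h : ∀ y ∈ U, f y = g y) (k : Fin n) :
    pd f k x = pd g k x := by
  unfold pd
  rw [Filter.EventuallyEq.fderiv_eq (Filter.eventually_of_mem (hU.mem_nhds hx) h)]

lemma pd_sub' {f g : (Fin n → ℝ) → ℝ} {x : Fin n → ℝ} (hf : DifferentiableAt ℝ f x)
    (hg : DifferentiableAt ℝ g x) (k : Fin n) :
    pd (fun y => f y - g y) k x = pd f k x - pd g k x := by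
  simp [pd, fderiv_fun_sub hf hg]

lemma pd_add' {f g : (Fin n → ℝ) → ℝ} {x : Fin n → ℝ} (hf : DifferentiableAt ℝ f x)
    (hg : DifferentiableAt ℝ g x) (k : Fin n) :
    pd (fun y => f y + g y) k x = pd f k x + pd g k x := by
  simp [pd, fderiv_fun_add hf hg]

lemma pd_mul' {f g : (Fin n → ℝ) → ℝ} {x : Fin n → ℝ} (hf : DifferentiableAt ℝ f x)
    (hg : DifferentiableAt ℝ g x) (k : Fin n) :
    pd (fun y => f y * g y) k x = f x * pd g k x + g x * pd f k x := by
  simp [pd, fderiv_fun_mul hf hg]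

lemma pd_const_mul' {f : (Fin n → ℝ) → ℝ} {x : Fin n → ℝ} (hf : DifferentiableAt ℝ f x)
    (c : ℝ) (k : Fin n) :
    pd (fun y => c * f y) k x = c * pd f k x := by
  simp [pd, fderiv_const_mul hf]

lemma diff_proj (i : Fin n) (x : Fin n → ℝ) :
    DifferentiableAt ℝ (fun y : Fin n → ℝ => y i) x := by
  have h := (ContinuousLinearMap.proj (R := ℝ) (φ := fun _ : Fin n => ℝ) i).differentiableAt
    (x := x)
  exact h

lemma pd_proj (i k : Fin n) (x : Fin n → ℝ) :
    pd (fun y : Fin n → ℝ => y i) k x = if i = k then 1 else 0 := by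
  have : fderiv ℝ (fun y : Fin n → ℝ => y i) x
      = (ContinuousLinearMap.proj i : ((Fin n → ℝ)) →L[ℝ] ℝ) := by
    have h := (ContinuousLinearMap.proj (R := ℝ) (φ := fun _ : Fin n => ℝ) i).fderiv (x := x)
    exact h
  simp [pd, this, Pi.single_apply]

lemma diffAt_of_cdOn (hU : IsOpen U) {f : (Fin n → ℝ) → ℝ} (hf : ContDiffOn ℝ (⊤ : ℕ∞) f U)
    {x : Fin n → ℝ} (hx : x ∈ U) : DifferentiableAt ℝ f x :=
  (hf.contDiffAt (hU.mem_nhds hx)).differentiableAt (by simp)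

lemma contDiffAt_pd (hU : IsOpen U) {f : (Fin n → ℝ) → ℝ} (hf : ContDiffOn ℝ (⊤ : ℕ∞) f U)
    {x : Fin n → ℝ} (hx : x ∈ U) (k : Fin n) : ContDiffAt ℝ (⊤ : ℕ∞) (pd f k) x := by
  have h1 : ContDiffAt ℝ (⊤ : ℕ∞) (fderiv ℝ f) x :=
    (hf.contDiffAt (hU.mem_nhds hx)).fderiv_right (by simp)
  have h2 := (ContinuousLinearMap.apply ℝ ℝ (Pi.single k (1:ℝ) : Fin n → ℝ)).contDiff
      (𝕜 := ℝ) (n := ((⊤ : ℕ∞) : WithTop ℕ∞))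
  exact h2.comp_contDiffAt x h1

lemma contDiffOn_pd (hU : IsOpen U) {f : (Fin n → ℝ) → ℝ} (hf : ContDiffOn ℝ (⊤ : ℕ∞) f U)
    (k : Fin n) : ContDiffOn ℝ (⊤ : ℕ∞) (pd f k) U :=
  fun _x hx => (contDiffAt_pd hU hf hx k).contDiffWithinAt

lemma pd_comm (hU : IsOpen U) {f : (Fin n → ℝ) → ℝ} (hf : ContDiffOn ℝ (⊤ : ℕ∞) f U)
    {x : Fin n → ℝ} (hx : x ∈ U) (j k : Fin n) :
    pd (pd f j) k x = pd (pd f k) j x := by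
  have hca : ContDiffAt ℝ (⊤ : ℕ∞) f x := hf.contDiffAt (hU.mem_nhds hx)
  have hsym : IsSymmSndFDerivAt ℝ f x := hca.isSymmSndFDerivAt (by rw [minSmoothness_of_isRCLikeNormedField]; exact WithTop.coe_le_coe.mpr le_top)
  have hdf : DifferentiableAt ℝ (fderiv ℝ f) x :=
    (hca.fderiv_right (m := 1) (by exact WithTop.coe_le_coe.mpr le_top)).differentiableAt one_ne_zero
  have key : ∀ v w : Fin n → ℝ,
      fderiv ℝ (fun y => fderiv ℝ f y v) x w = fderiv ℝ (fderiv ℝ f) x w v := by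
    intro v w
    rw [fderiv_clm_apply hdf (differentiableAt_const v)]
    simp
  unfold pd
  rw [key, key, hsym]

lemma fderiv_zero_of_pd {F : (Fin n → ℝ) → ℝ} {x : Fin n → ℝ}
    (h : ∀ k : Fin n, pd F k x = 0) : fderiv ℝ F x = 0 := by
  refine ContinuousLinearMap.ext fun v => ?_
  have hv : v = ∑ i, v i • (Pi.single i (1:ℝ) : Fin n → ℝ) := by
    funext j
    simp [Pi.single_apply]
  rw [hv, map_sum, ContinuousLinearMap.zero_apply]
  refine Finset.sum_eq_zero fun i _ => ?_
  rw [map_smul]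
  have h' := h i
  unfold pd at h'
  simp [h']

lemma constOn (hUo : IsOpen U) (hUc : IsPreconnected U)
    {F : (Fin n → ℝ) → ℝ}
    (hd : ∀ x ∈ U, DifferentiableAt ℝ F x)
    (hF : ∀ x ∈ U, fderiv ℝ F x = 0)
    {x0 : Fin n → ℝ} (hx0 : x0 ∈ U) : ∀ x ∈ U, F x = F x0 := by
  set u : Set (Fin n → ℝ) := {y | y ∈ U ∧ F y = F x0} with hu
  have hu_open : IsOpen u := by
    rw [Metric.isOpen_iff]
    rintro y ⟨hyU, hyF⟩
    obtain ⟨r, hr, hball⟩ := Metric.isOpen_iff.1 hUo y hyU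
    refine ⟨r, hr, fun z hz => ⟨hball hz, ?_⟩⟩
    have hconv : Convex ℝ (Metric.ball y r) := convex_ball y r
    have hdiff : DifferentiableOn ℝ F (Metric.ball y r) :=
      fun w hw => (hd w (hball hw)).differentiableWithinAt
    have hz0 : ∀ w ∈ Metric.ball y r, fderivWithin ℝ F (Metric.ball y r) w = 0 := by
      intro w hw
      rw [fderivWithin_of_isOpen Metric.isOpen_ball hw]
      exact hF w (hball hw)
    have := hconv.is_const_of_fderivWithin_eq_zero hdiff hz0 hz (Metric.mem_ball_self hr)
    rw [this, hyF]
  have hne : (U ∩ u).Nonempty := ⟨x0, hx0, hx0, rfl⟩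
  have hcl : closure u ∩ U ⊆ u := by
    rintro y ⟨hyc, hyU⟩
    refine ⟨hyU, ?_⟩
    have hnb : (nhdsWithin y u).NeBot := mem_closure_iff_nhdsWithin_neBot.mp hyc
    have h1 : Filter.Tendsto F (nhdsWithin y u) (nhds (F y)) :=
      (hd y hyU).continuousAt.continuousWithinAt
    have h2 : Filter.Tendsto F (nhdsWithin y u) (nhds (F x0)) := by
      refine Filter.Tendsto.congr' ?_ tendsto_const_nhds
      filter_upwards [self_mem_nhdsWithin] with z hz
      exact hz.2.symm
    exact tendsto_nhds_unique h1 h2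
  have hfin := hUc.subset_of_closure_inter_subset hu_open hne hcl
  exact fun x hx => (hfin hx).2

lemma lieB_const_const (c d : Fin n → ℝ) (x : Fin n → ℝ) :
    lieB (fun _ => c) (fun _ => d) x = 0 := by
  funext i; simp [lieB, pd]

lemma lieB_fun_const (f : (Fin n → ℝ) → Fin n → ℝ) (d : Fin n → ℝ) (x : Fin n → ℝ) :
    lieB f (fun _ => d) x = fun i => -∑ s, d s * pd (fun y => f y i) s x := by
  funext i; simp [lieB, pd]

lemma lieB_const_fun (c : Fin n → ℝ) (g : (Fin n → ℝ) → Fin n → ℝ) (x : Fin n → ℝ) :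
    lieB (fun _ => c) g x = fun i => ∑ s, c s * pd (fun y => g y i) s x := by
  funext i; simp [lieB, pd]

lemma appE_const_mat (A : Matrix (Fin n) (Fin n) ℝ) (p : Fin n) :
    appE (fun _ => A) (fun _ => Pi.single p (1:ℝ)) = fun _ => fun i => A i p := by
  funext x i; simp [appE]

lemma appE_var (L : (Fin n → ℝ) → Matrix (Fin n) (Fin n) ℝ) (p : Fin n) :
    appE L (fun _ => Pi.single p (1:ℝ)) = fun y => fun i => L y i p := by
  funext y i; simp [appE]

lemma sum_if_if (P : Prop) [Decidable P] (a : Fin n) (f : Fin n → ℝ) :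
    (∑ t, if P then if t = a then f t else 0 else 0) = if P then f a else 0 := by
  split_ifs <;> simp

lemma master (L : (Fin n → ℝ) → Matrix (Fin n) (Fin n) ℝ)
    (hcomm : ∀ A : Matrix (Fin n) (Fin n) ℝ, A.IsSymm →
      ∀ v w : (Fin n → ℝ) → Fin n → ℝ, ContDiffOn ℝ (⊤ : ℕ∞) v U → ContDiffOn ℝ (⊤ : ℕ∞) w U →
        ∀ x ∈ U, fnB L (fun _ => A) v w x = 0)
    {x : Fin n → ℝ} (hx : x ∈ U) (a b i p q : Fin n) :
    (if i = a then pd (fun y => L y b q) p x else 0)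
      - (if i = a then pd (fun y => L y b p) q x else 0)
      + (if i = b then pd (fun y => L y a q) p x else 0)
      - (if i = b then pd (fun y => L y a p) q x else 0)
      + (if q = b then pd (fun y => L y i p) a x else 0)
      + (if q = a then pd (fun y => L y i p) b x else 0)
      - (if p = b then pd (fun y => L y i q) a x else 0)
      - (if p = a then pd (fun y => L y i q) b x else 0) = 0 := by
  classical
  set A : Matrix (Fin n) (Fin n) ℝ :=
    Matrix.of (fun u v => (if u = a then (1:ℝ) else 0) * (if v = b then 1 else 0)
      + (if u = b then (1:ℝ) else 0) * (if v = a then 1 else 0)) with hA_def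
  have hA : A.IsSymm := by
    unfold Matrix.IsSymm
    ext u v
    simp only [Matrix.transpose_apply, hA_def, Matrix.of_apply]
    ring
  have h := hcomm A hA (fun _ => Pi.single p 1) (fun _ => Pi.single q 1)
    contDiffOn_const contDiffOn_const x hx
  have hi := congrFun h i
  rw [fnB] at hi
  rw [appE_const_mat, appE_const_mat, appE_var, appE_var] at hi
  rw [lieB_const_const, lieB_const_const, lieB_const_const, lieB_fun_const,
    lieB_const_fun, lieB_fun_const, lieB_const_fun] at hi
  simp only [Matrix.mulVec_zero, Pi.add_apply, Pi.sub_apply, Pi.zero_apply,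
    add_zero, zero_add, sub_zero, zero_sub] at hi
  simp only [Matrix.mulVec, dotProduct, hA_def, Matrix.of_apply, Pi.single_apply,
    mul_ite, ite_mul, mul_zero, zero_mul, mul_one, one_mul, add_mul, mul_add,
    Finset.sum_add_distrib, Finset.sum_ite_eq, Finset.sum_ite_eq', Finset.mem_univ,
    if_true, mul_neg, Finset.sum_neg_distrib, neg_add, neg_neg, neg_sub] at hi
  rw [sum_if_if, sum_if_if, sum_if_if, sum_if_if] at hi
  linarith [hi]

lemma pd_poly (i j : Fin n) (b c K : ℝ) (k : Fin n) (x : Fin n → ℝ) :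
    pd (fun y : Fin n → ℝ => y i * b + c * y j + K * (y i * y j)) k x
      = b * (if i = k then 1 else 0) + c * (if j = k then 1 else 0)
        + K * (x i * (if j = k then 1 else 0) + x j * (if i = k then 1 else 0)) := by
  have d1 : DifferentiableAt ℝ (fun y : Fin n → ℝ => y i * b) x :=
    (diff_proj i x).mul (differentiableAt_const b)
  have d2 : DifferentiableAt ℝ (fun y : Fin n → ℝ => c * y j) x :=
    (differentiableAt_const c).mul (diff_proj j x)
  have d12 : DifferentiableAt ℝ (fun y : Fin n → ℝ => y i * b + c * y j) x := d1.add d2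
  have dij : DifferentiableAt ℝ (fun y : Fin n → ℝ => y i * y j) x :=
    (diff_proj i x).mul (diff_proj j x)
  have d3 : DifferentiableAt ℝ (fun y : Fin n → ℝ => K * (y i * y j)) x :=
    (differentiableAt_const K).mul dij
  rw [pd_add' d12 d3 k, pd_add' d1 d2 k,
    pd_mul' (diff_proj i x) (differentiableAt_const b) k,
    pd_const_mul' (diff_proj j x) c k,
    pd_const_mul' dij K k,
    pd_mul' (diff_proj i x) (diff_proj j x) k,
    pd_proj, pd_proj, pd_const']
  ring

end Stmt12Aux

/-- if `[[L, A]] = 0` for every constant symmetric `A`, then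
`L(x) = A₀ + x bᵀ + c xᵀ + K x xᵀ` (n ≥ 3). -/
theorem stmt_12 {n : ℕ} (hn : 3 ≤ n) (U : Set (Fin n → ℝ)) (hUo : IsOpen U)
    (hUc : IsConnected U)
    (L : (Fin n → ℝ) → Matrix (Fin n) (Fin n) ℝ)
    (hLs : ∀ i j, ContDiffOn ℝ (⊤ : ℕ∞) (fun x => L x i j) U)
    (hcomm : ∀ A : Matrix (Fin n) (Fin n) ℝ, A.IsSymm →
      ∀ v w : (Fin n → ℝ) → Fin n → ℝ, ContDiffOn ℝ (⊤ : ℕ∞) v U → ContDiffOn ℝ (⊤ : ℕ∞) w U →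
        ∀ x ∈ U, fnB L (fun _ => A) v w x = 0) :
    ∃ (A₀ : Matrix (Fin n) (Fin n) ℝ) (b c : Fin n → ℝ) (K : ℝ),
      ∀ x ∈ U, ∀ i j : Fin n,
        L x i j = A₀ i j + x i * b j + c i * x j + K * (x i * x j) := by
    classical
  obtain ⟨x0, hx0⟩ := hUc.nonempty
  have hUpc : IsPreconnected U := hUc.isPreconnected
  have h0 : 0 < n := by omega
  have h1 : 1 < n := by omega
  have h2 : 2 < n := by omega
  set e0 : Fin n := ⟨0, h0⟩ with he0_def
  set e1 : Fin n := ⟨1, h1⟩ with he1_def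
  set e2 : Fin n := ⟨2, h2⟩ with he2_def
  have he01 : e0 ≠ e1 := by simp [he0_def, he1_def, Fin.ext_iff]
  have he02 : e0 ≠ e2 := by simp [he0_def, he2_def, Fin.ext_iff]
  have he12 : e1 ≠ e2 := by simp [he1_def, he2_def, Fin.ext_iff]
  have third : ∀ i j : Fin n, ∃ m : Fin n, m ≠ i ∧ m ≠ j := by
    intro i j
    by_cases h0' : e0 ≠ i ∧ e0 ≠ j
    · exact ⟨e0, h0'⟩
    by_cases h1' : e1 ≠ i ∧ e1 ≠ j
    · exact ⟨e1, h1'⟩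
    push_neg at h0' h1'
    have k0 : e0 = i ∨ e0 = j := by
      by_cases hh : e0 = i
      · exact Or.inl hh
      · exact Or.inr (h0' hh)
    have k1 : e1 = i ∨ e1 = j := by
      by_cases hh : e1 = i
      · exact Or.inl hh
      · exact Or.inr (h1' hh)
    refine ⟨e2, ?_, ?_⟩ <;> intro hE <;> rcases k0 with k0 | k0 <;> rcases k1 with k1 | k1 <;>
      first
        | exact he01 (k0.trans k1.symm)
        | exact he02 (k0.trans hE.symm)
        | exact he12 (k1.trans hE.symm)
  -- the four pointwise consequences of the master equation
  have hF1 : ∀ x ∈ U, ∀ i j k : Fin n, i ≠ k → j ≠ k →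
      pd (fun y => L y i j) k x = 0 := by
    intro x hx i j k hik hjk
    have h := master L hcomm hx k k i j k
    simp [hik, hjk] at h
    linarith
  have hF2 : ∀ x ∈ U, ∀ i a b : Fin n, a ≠ i → b ≠ i → a ≠ b →
      pd (fun y => L y i b) b x = pd (fun y => L y i a) a x := by
    intro x hx i a b hai hbi hab
    have h := master L hcomm hx a b i b a
    simp [Ne.symm hai, Ne.symm hbi, hab, Ne.symm hab] at h
    linarith
  have hF3 : ∀ x ∈ U, ∀ c' a b : Fin n, a ≠ c' → b ≠ c' → a ≠ b →
      pd (fun y => L y b c') b x = pd (fun y => L y a c') a x := by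
    intro x hx c' a b hac hbc hab
    have h := master L hcomm hx a b a b c'
    have hz : pd (fun y => L y b b) c' x = 0 := hF1 x hx b b c' hbc hbc
    simp [hab, Ne.symm hab, Ne.symm hac, Ne.symm hbc, hz] at h
    linarith
  have hF4 : ∀ x ∈ U, ∀ a b : Fin n, a ≠ b →
      pd (fun y => L y a a) a x
        = pd (fun y => L y b a) b x + pd (fun y => L y a b) b x := by
    intro x hx a b hab
    have h := master L hcomm hx a b a b a
    have hz : pd (fun y => L y b b) a x = 0 := hF1 x hx b b a (Ne.symm hab) (Ne.symm hab)
    simp [hab, Ne.symm hab, hz] at h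
    linarith
  -- the choice of a companion index
  set pick : Fin n → Fin n := fun j => if j = e0 then e1 else e0 with hpick_def
  have hpick : ∀ j, pick j ≠ j := by
    intro j
    rw [hpick_def]
    by_cases h : j = e0
    · simp only [if_pos h]
      rw [h]
      exact Ne.symm he01
    · simp only [if_neg h]
      exact fun hh => h hh.symm
  set βf : Fin n → (Fin n → ℝ) → ℝ := fun j => pd (fun y => L y (pick j) j) (pick j)
    with hβf_def
  set γf : Fin n → (Fin n → ℝ) → ℝ := fun i => pd (fun y => L y i (pick i)) (pick i)
    with hγf_def
  have hβ : ∀ x ∈ U, ∀ a j : Fin n, a ≠ j → pd (fun y => L y a j) a x = βf j x := by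
    intro x hx a j haj
    by_cases h : a = pick j
    · simp only [hβf_def]
      rw [h]
    · have := hF3 x hx j (pick j) a (hpick j) haj (fun hh => h hh.symm)
      simp only [hβf_def]
      exact this
  have hγ : ∀ x ∈ U, ∀ b i : Fin n, b ≠ i → pd (fun y => L y i b) b x = γf i x := by
    intro x hx b i hbi
    by_cases h : b = pick i
    · simp only [hγf_def]
      rw [h]
    · have := hF2 x hx i (pick i) b (hpick i) hbi (fun hh => h hh.symm)
      simp only [hγf_def]
      exact this
  have hdiag : ∀ x ∈ U, ∀ a : Fin n,
      pd (fun y => L y a a) a x = βf a x + γf a x := by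
    intro x hx a
    have h := hF4 x hx a (pick a) (Ne.symm (hpick a))
    rw [hβ x hx (pick a) a (hpick a), hγ x hx (pick a) a (hpick a)] at h
    exact h
  have hβf_cd : ∀ j, ContDiffOn ℝ (⊤ : ℕ∞) (βf j) U := by
    intro j
    simp only [hβf_def]
    exact contDiffOn_pd hUo (hLs (pick j) j) (pick j)
  have hγf_cd : ∀ i, ContDiffOn ℝ (⊤ : ℕ∞) (γf i) U := by
    intro i
    simp only [hγf_def]
    exact contDiffOn_pd hUo (hLs i (pick i)) (pick i)
  have hβpd : ∀ x ∈ U, ∀ j k : Fin n, k ≠ j → pd (βf j) k x = 0 := by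
    intro x hx j k hkj
    obtain ⟨m, hmj, hmk⟩ := third j k
    have h1 : pd (βf j) k x = pd (pd (fun y => L y m j) m) k x :=
      pd_congr_on hUo hx (fun y hy => (hβ y hy m j hmj).symm) k
    rw [h1, pd_comm hUo (hLs m j) hx m k]
    have h2 : pd (pd (fun y => L y m j) k) m x = pd (fun _ => (0:ℝ)) m x :=
      pd_congr_on hUo hx (fun y hy => hF1 y hy m j k hmk (Ne.symm hkj)) m
    rw [h2, pd_const']
  have hγpd : ∀ x ∈ U, ∀ i k : Fin n, k ≠ i → pd (γf i) k x = 0 := by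
    intro x hx i k hki
    obtain ⟨m, hmi, hmk⟩ := third i k
    have h1 : pd (γf i) k x = pd (pd (fun y => L y i m) m) k x :=
      pd_congr_on hUo hx (fun y hy => (hγ y hy m i hmi).symm) k
    rw [h1, pd_comm hUo (hLs i m) hx m k]
    have h2 : pd (pd (fun y => L y i m) k) m x = pd (fun _ => (0:ℝ)) m x :=
      pd_congr_on hUo hx (fun y hy => hF1 y hy i m k (Ne.symm hki) hmk) m
    rw [h2, pd_const']
  have hcross : ∀ x ∈ U, ∀ i j : Fin n, i ≠ j → pd (βf j) j x = pd (γf i) i x := by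
    intro x hx i j hij
    have h1 : pd (βf j) j x = pd (pd (fun y => L y i j) i) j x :=
      pd_congr_on hUo hx (fun y hy => (hβ y hy i j hij).symm) j
    rw [h1, pd_comm hUo (hLs i j) hx i j]
    exact pd_congr_on hUo hx (fun y hy => hγ y hy j i (Ne.symm hij)) i
  set κ : (Fin n → ℝ) → ℝ := pd (βf e0) e0 with hκ_def
  have hκβ : ∀ x ∈ U, ∀ j : Fin n, pd (βf j) j x = κ x := by
    intro x hx j
    by_cases h : j = e0
    · rw [h, hκ_def]
    · obtain ⟨m, hmj, hm0⟩ := third j e0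
      rw [hcross x hx m j hmj, hκ_def]
      exact (hcross x hx m e0 hm0).symm
  have hκγ : ∀ x ∈ U, ∀ i : Fin n, pd (γf i) i x = κ x := by
    intro x hx i
    exact ((hcross x hx i (pick i) (Ne.symm (hpick i))).symm).trans (hκβ x hx (pick i))
  have hκpd : ∀ x ∈ U, ∀ k : Fin n, pd κ k x = 0 := by
    intro x hx k
    by_cases hk : k = e0
    · rw [hk]
      have h1 : pd κ e0 x = pd (pd (γf e1) e1) e0 x :=
        pd_congr_on hUo hx (fun y hy => (hκγ y hy e1).symm) e0
      rw [h1, pd_comm hUo (hγf_cd e1) hx e1 e0]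
      have h2 : pd (pd (γf e1) e0) e1 x = pd (fun _ => (0:ℝ)) e1 x :=
        pd_congr_on hUo hx (fun y hy => hγpd y hy e1 e0 he01) e1
      rw [h2, pd_const']
    · rw [hκ_def, pd_comm hUo (hβf_cd e0) hx e0 k]
      have h2 : pd (pd (βf e0) k) e0 x = pd (fun _ => (0:ℝ)) e0 x :=
        pd_congr_on hUo hx (fun y hy => hβpd y hy e0 k hk) e0
      rw [h2, pd_const']
  have hκdiff : ∀ x ∈ U, DifferentiableAt ℝ κ x := by
    intro x hx
    rw [hκ_def]
    exact (contDiffAt_pd hUo (hβf_cd e0) hx e0).differentiableAt (by simp)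
  have hκconst : ∀ x ∈ U, κ x = κ x0 :=
    constOn hUo hUpc hκdiff (fun x hx => fderiv_zero_of_pd (fun k => hκpd x hx k)) hx0
  -- β and γ are affine
  have hβval : ∀ j : Fin n, ∀ x ∈ U, βf j x = (βf j x0 - κ x0 * x0 j) + κ x0 * x j := by
    intro j
    have hΦdiff : ∀ y ∈ U, DifferentiableAt ℝ (fun y => βf j y - κ x0 * y j) y := by
      intro y hy
      exact (diffAt_of_cdOn hUo (hβf_cd j) hy).sub
        ((differentiableAt_const (κ x0)).mul (diff_proj j y))
    have hΦpd : ∀ y ∈ U, ∀ k : Fin n, pd (fun y => βf j y - κ x0 * y j) k y = 0 := by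
      intro y hy k
      rw [pd_sub' (g := fun y => κ x0 * y j) (diffAt_of_cdOn hUo (hβf_cd j) hy)
        ((differentiableAt_const (κ x0)).mul (diff_proj j y)) k,
        pd_const_mul' (diff_proj j y) (κ x0) k, pd_proj]
      by_cases hk : k = j
      · rw [hk, hκβ y hy j, hκconst y hy]
        simp
      · rw [hβpd y hy j k hk]
        simp [Ne.symm hk]
    have hc := constOn hUo hUpc hΦdiff (fun y hy => fderiv_zero_of_pd (hΦpd y hy)) hx0
    intro x hx
    have := hc x hx
    linarith [this]
  have hγval : ∀ i : Fin n, ∀ x ∈ U, γf i x = (γf i x0 - κ x0 * x0 i) + κ x0 * x i := by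
    intro i
    have hΦdiff : ∀ y ∈ U, DifferentiableAt ℝ (fun y => γf i y - κ x0 * y i) y := by
      intro y hy
      exact (diffAt_of_cdOn hUo (hγf_cd i) hy).sub
        ((differentiableAt_const (κ x0)).mul (diff_proj i y))
    have hΦpd : ∀ y ∈ U, ∀ k : Fin n, pd (fun y => γf i y - κ x0 * y i) k y = 0 := by
      intro y hy k
      rw [pd_sub' (g := fun y => κ x0 * y i) (diffAt_of_cdOn hUo (hγf_cd i) hy)
        ((differentiableAt_const (κ x0)).mul (diff_proj i y)) k,
        pd_const_mul' (diff_proj i y) (κ x0) k, pd_proj]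
      by_cases hk : k = i
      · rw [hk, hκγ y hy i, hκconst y hy]
        simp
      · rw [hγpd y hy i k hk]
        simp [Ne.symm hk]
    have hc := constOn hUo hUpc hΦdiff (fun y hy => fderiv_zero_of_pd (hΦpd y hy)) hx0
    intro x hx
    have := hc x hx
    linarith [this]
  -- assemble the final answer
  refine ⟨Matrix.of (fun i j => L x0 i j - (x0 i * (βf j x0 - κ x0 * x0 j)
      + (γf i x0 - κ x0 * x0 i) * x0 j + κ x0 * (x0 i * x0 j))),
    fun j => βf j x0 - κ x0 * x0 j, fun i => γf i x0 - κ x0 * x0 i, κ x0, ?_⟩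
  intro x hx i j
  simp only [Matrix.of_apply]
  have hGdiff : ∀ y ∈ U, DifferentiableAt ℝ (fun y => L y i j
      - (y i * (βf j x0 - κ x0 * x0 j) + (γf i x0 - κ x0 * x0 i) * y j
        + κ x0 * (y i * y j))) y := by
    intro y hy
    exact (diffAt_of_cdOn hUo (hLs i j) hy).sub
      ((((diff_proj i y).mul (differentiableAt_const _)).add
        ((differentiableAt_const _).mul (diff_proj j y))).add
        ((differentiableAt_const _).mul ((diff_proj i y).mul (diff_proj j y))))
  have hGpd : ∀ y ∈ U, ∀ k : Fin n, pd (fun y => L y i j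
      - (y i * (βf j x0 - κ x0 * x0 j) + (γf i x0 - κ x0 * x0 i) * y j
        + κ x0 * (y i * y j))) k y = 0 := by
    intro y hy k
    rw [pd_sub' (g := fun y => y i * (βf j x0 - κ x0 * x0 j) + (γf i x0 - κ x0 * x0 i) * y j
        + κ x0 * (y i * y j)) (diffAt_of_cdOn hUo (hLs i j) hy)
      ((((diff_proj i y).mul (differentiableAt_const _)).add
        ((differentiableAt_const _).mul (diff_proj j y))).add
        ((differentiableAt_const _).mul ((diff_proj i y).mul (diff_proj j y)))) k,
      pd_poly]
    by_cases hik : i = k <;> by_cases hjk : j = k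
    · have hij : i = j := hik.trans hjk.symm
      subst hij
      subst hik
      rw [hdiag y hy i, hβval i y hy, hγval i y hy]
      simp
      try ring
    · subst hik
      have hij : i ≠ j := fun hh => hjk hh.symm
      rw [hβ y hy i j hij, hβval j y hy]
      simp [if_neg (fun hh => hjk hh : ¬ j = i)]
      try ring
    · subst hjk
      have hji : j ≠ i := fun hh => hik hh.symm
      rw [hγ y hy j i hji, hγval i y hy]
      simp [if_neg (fun hh => hik hh : ¬ i = j)]
      try ring
    · rw [hF1 y hy i j k hik hjk]
      simp [if_neg hik, if_neg hjk]
  have hc := constOn hUo hUpc hGdiff (fun y hy => fderiv_zero_of_pd (hGpd y hy)) hx0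
  have hG := hc x hx
  ring_nf at hG ⊢
  linarith [hG]
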